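/- The operator T_g defined by (T_g η)_i = Σ_j P_{ij}(ν_{ij}^{(g)} ∗ η_j) is non-expansive in the supremum Cramér metric: for all families η, ζ of probability measures on ℝ with finite second moment, max_i ℓ_C((T_g η)_i, (T_g ζ)_i) ≤ max_i ℓ_C(η_i, ζ_i). -/

import Mathlib

open MeasureTheory
open scoped ENNReal NNReal

/-- The cumulative distribution function of a measure on ℝ. -/
noncomputable def cdfFn (μ : Measure ℝ) (x : ℝ) : ℝ := (μ (Set.Iic x)).toReal

/-- The Cramér distance: the L² distance between CDFs. -/
noncomputable def cramerDist (μ ν : Measure ℝ) : ℝ :=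
  Real.sqrt (∫ x, (cdfFn μ x - cdfFn ν x) ^ 2)

/-! Writing `F_μ` for the CDF of `μ`, one has `F_{ν ∗ μ}(x) = ∫ F_μ(x - y) dν(y)`, and the CDF of
a mixture is the mixture of the CDFs. Jensen's inequality for `t ↦ t²` therefore bounds the
squared CDF difference of `(T η)_i` and `(T ζ)_i` at `x` by
`Σ_j P_ij ∫ (F_{η_j} - F_{ζ_j})²(x - y) dν_ij(y)`.
Integrating in `x` (Tonelli and translation invariance of Lebesgue measure) gives
`ℓ_C²((T η)_i, (T ζ)_i) ≤ Σ_j P_ij ℓ_C²(η_j, ζ_j) ≤ max_j ℓ_C²(η_j, ζ_j)`. A finite first moment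
makes `ℓ_C²` finite, by the layer-cake formula applied to the two tails of the CDF. -/

open Set

lemma measurable_measure_Iic (μ : Measure ℝ) : Measurable fun x => μ (Iic x) :=
  Monotone.measurable fun _ _ h => measure_mono (Iic_subset_Iic.2 h)

lemma measurable_measure_Ioi (μ : Measure ℝ) : Measurable fun x => μ (Ioi x) :=
  Antitone.measurable fun _ _ h => measure_mono (Ioi_subset_Ioi h)

lemma measurable_cdfFn (μ : Measure ℝ) : Measurable (cdfFn μ) :=
  (measurable_measure_Iic μ).ennreal_toReal

lemma cdfFn_nonneg (μ : Measure ℝ) (x : ℝ) : 0 ≤ cdfFn μ x := ENNReal.toReal_nonneg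

lemma cdfFn_le_one (μ : Measure ℝ) [IsProbabilityMeasure μ] (x : ℝ) : cdfFn μ x ≤ 1 :=
  measureReal_le_one

lemma ofReal_cdfFn (μ : Measure ℝ) [IsFiniteMeasure μ] (x : ℝ) :
    ENNReal.ofReal (cdfFn μ x) = μ (Iic x) :=
  ofReal_measureReal

lemma ofReal_one_sub_cdfFn (μ : Measure ℝ) [IsProbabilityMeasure μ] (x : ℝ) :
    ENNReal.ofReal (1 - cdfFn μ x) = μ (Ioi x) := by
  rw [cdfFn, ← measureReal_def, ← probReal_compl_eq_one_sub measurableSet_Iic, compl_Iic,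
    ofReal_measureReal]

lemma abs_cdfFn_sub_cdfFn_le_one (μ ν : Measure ℝ) [IsProbabilityMeasure μ]
    [IsProbabilityMeasure ν] (x : ℝ) : |cdfFn μ x - cdfFn ν x| ≤ 1 :=
  abs_sub_le_of_nonneg_of_le (cdfFn_nonneg μ x) (cdfFn_le_one μ x) (cdfFn_nonneg ν x)
    (cdfFn_le_one ν x)

/-- The squared Cramér distance as a lower integral: `cramerDist` uses the Bochner integral,
whose junk value `0` on non-integrable functions would otherwise get in the way. -/
noncomputable def cramerSq (μ ν : Measure ℝ) : ℝ≥0∞ :=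
  ∫⁻ x, ENNReal.ofReal ((cdfFn μ x - cdfFn ν x) ^ 2)

lemma measurable_sq_cdfFn_sub (μ ν : Measure ℝ) :
    Measurable fun x => (cdfFn μ x - cdfFn ν x) ^ 2 :=
  ((measurable_cdfFn μ).sub (measurable_cdfFn ν)).pow_const 2

lemma cramerDist_eq_sqrt_toReal_cramerSq (μ ν : Measure ℝ) :
    cramerDist μ ν = √(cramerSq μ ν).toReal := by
  rw [cramerDist, cramerSq, integral_eq_lintegral_of_nonneg_ae (ae_of_all _ fun _ => sq_nonneg _)
    (measurable_sq_cdfFn_sub μ ν).aestronglyMeasurable]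

lemma cramerDist_nonneg (μ ν : Measure ℝ) : 0 ≤ cramerDist μ ν := Real.sqrt_nonneg _

lemma cramerSq_eq_ofReal_sq_cramerDist {μ ν : Measure ℝ} (h : cramerSq μ ν ≠ ∞) :
    cramerSq μ ν = ENNReal.ofReal (cramerDist μ ν ^ 2) := by
  rw [cramerDist_eq_sqrt_toReal_cramerSq, Real.sq_sqrt ENNReal.toReal_nonneg,
    ENNReal.ofReal_toReal h]

lemma cramerDist_le_of_cramerSq_le {μ ν : Measure ℝ} {r : ℝ} (hr : 0 ≤ r)
    (h : cramerSq μ ν ≤ ENNReal.ofReal (r ^ 2)) : cramerDist μ ν ≤ r := by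
  rw [cramerDist_eq_sqrt_toReal_cramerSq]
  calc √(cramerSq μ ν).toReal ≤ √(r ^ 2) :=
        Real.sqrt_le_sqrt (ENNReal.toReal_le_of_le_ofReal (sq_nonneg r) h)
    _ = r := Real.sqrt_sq hr

lemma cdfFn_sum_smul {ι : Type*} [Fintype ι] (w : ι → ℝ≥0) (μ : ι → Measure ℝ)
    [∀ j, IsFiniteMeasure (μ j)] (x : ℝ) :
    cdfFn (∑ j, (w j : ℝ≥0∞) • μ j) x = ∑ j, (w j : ℝ) * cdfFn (μ j) x := by
  simp only [cdfFn, Measure.finsetSum_apply, Measure.smul_apply, smul_eq_mul]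
  rw [ENNReal.toReal_sum fun j _ => ENNReal.mul_ne_top ENNReal.coe_ne_top (measure_ne_top _ _)]
  simp only [ENNReal.toReal_mul, ENNReal.coe_toReal]

lemma cramerSq_sum_smul_le {ι : Type*} [Fintype ι] (w : ι → ℝ≥0) (hw : ∑ j, w j = 1)
    (μ μ' : ι → Measure ℝ) [∀ j, IsFiniteMeasure (μ j)] [∀ j, IsFiniteMeasure (μ' j)] :
    cramerSq (∑ j, (w j : ℝ≥0∞) • μ j) (∑ j, (w j : ℝ≥0∞) • μ' j)
      ≤ ∑ j, (w j : ℝ≥0∞) * cramerSq (μ j) (μ' j) := by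
  have jensen (x : ℝ) :
      ENNReal.ofReal ((cdfFn (∑ j, (w j : ℝ≥0∞) • μ j) x
          - cdfFn (∑ j, (w j : ℝ≥0∞) • μ' j) x) ^ 2)
        ≤ ∑ j, (w j : ℝ≥0∞) * ENNReal.ofReal ((cdfFn (μ j) x - cdfFn (μ' j) x) ^ 2) := by
    set d := fun j => cdfFn (μ j) x - cdfFn (μ' j) x
    have hsq : (∑ j, (w j : ℝ) * d j) ^ 2 ≤ ∑ j, (w j : ℝ) * d j ^ 2 := by
      simpa using (even_two.convexOn_pow (𝕜 := ℝ)).map_sum_le (t := Finset.univ)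
        (fun j _ => (w j).coe_nonneg) (by exact_mod_cast hw) (fun j _ => mem_univ (d j))
    rw [cdfFn_sum_smul, cdfFn_sum_smul, ← Finset.sum_sub_distrib]
    simp_rw [← mul_sub]
    calc ENNReal.ofReal ((∑ j, (w j : ℝ) * d j) ^ 2)
        ≤ ENNReal.ofReal (∑ j, (w j : ℝ) * d j ^ 2) := ENNReal.ofReal_le_ofReal hsq
      _ = ∑ j, (w j : ℝ≥0∞) * ENNReal.ofReal (d j ^ 2) := by
        rw [ENNReal.ofReal_sum_of_nonneg fun j _ => by positivity]
        simp_rw [ENNReal.ofReal_mul (w _).coe_nonneg, ENNReal.ofReal_coe_nnreal]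
  have hmeas (j : ι) := (measurable_sq_cdfFn_sub (μ j) (μ' j)).ennreal_ofReal
  calc _ ≤ ∫⁻ x, ∑ j, (w j : ℝ≥0∞) * ENNReal.ofReal ((cdfFn (μ j) x - cdfFn (μ' j) x) ^ 2) :=
        lintegral_mono jensen
    _ = ∑ j, (w j : ℝ≥0∞) * cramerSq (μ j) (μ' j) := by
        rw [lintegral_finsetSum _ fun j _ => (hmeas j).const_mul _]
        simp_rw [lintegral_const_mul _ (hmeas _), cramerSq]

lemma cdfFn_conv (ν κ : Measure ℝ) [SFinite ν] [IsFiniteMeasure κ] (x : ℝ) :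
    cdfFn (ν ∗ κ) x = ∫ y, cdfFn κ (x - y) ∂ν := by
  have hmeas : Measurable fun y => κ (Iic (x - y)) :=
    Antitone.measurable fun _ _ h => measure_mono (Iic_subset_Iic.2 (sub_le_sub_left h x))
  have hconv : (ν ∗ κ) (Iic x) = ∫⁻ y, κ (Iic (x - y)) ∂ν := by
    rw [Measure.conv, Measure.map_apply measurable_add measurableSet_Iic,
      Measure.prod_apply (measurable_add measurableSet_Iic)]
    congr! with y
    ext z
    simp [le_sub_iff_add_le']
  rw [cdfFn, hconv,
    ← integral_toReal hmeas.aemeasurable (ae_of_all _ fun _ => measure_lt_top _ _)]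
  rfl

lemma integrable_cdfFn_comp (κ ν : Measure ℝ) [IsProbabilityMeasure κ] [IsFiniteMeasure ν]
    {f : ℝ → ℝ} (hf : Measurable f) : Integrable (fun y => cdfFn κ (f y)) ν :=
  Integrable.of_bound ((measurable_cdfFn κ).comp hf).aestronglyMeasurable 1
    (ae_of_all _ fun y => by
      rw [Real.norm_of_nonneg (cdfFn_nonneg κ _)]; exact cdfFn_le_one κ _)

lemma ofReal_sq_integral_le_lintegral {α : Type*} [MeasurableSpace α] (ρ : Measure α)
    [IsProbabilityMeasure ρ] {g : α → ℝ} (hg : MemLp g 2 ρ) :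
    ENNReal.ofReal ((∫ y, g y ∂ρ) ^ 2) ≤ ∫⁻ y, ENNReal.ofReal (g y ^ 2) ∂ρ := by
  rw [← ofReal_integral_eq_lintegral_ofReal hg.integrable_sq (ae_of_all _ fun _ => sq_nonneg _)]
  exact ENNReal.ofReal_le_ofReal <| (even_two.convexOn_pow (𝕜 := ℝ)).map_integral_le
    (continuous_pow 2).continuousOn isClosed_univ (ae_of_all _ fun _ => mem_univ _)
    (hg.integrable one_le_two) hg.integrable_sq

lemma lintegral_lintegral_comp_sub {G : Type*} [MeasurableSpace G] [AddGroup G]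
    [MeasurableAdd₂ G] [MeasurableNeg G] (μ : Measure G) [SFinite μ] [μ.IsAddRightInvariant]
    (ν : Measure G) [SFinite ν] {f : G → ℝ≥0∞} (hf : Measurable f) :
    ∫⁻ x, ∫⁻ y, f (x - y) ∂ν ∂μ = ν univ * ∫⁻ x, f x ∂μ := by
  rw [lintegral_lintegral_swap (f := fun x y => f (x - y)) (hf.comp measurable_sub).aemeasurable]
  simp_rw [lintegral_sub_right_eq_self f, lintegral_const, mul_comm]

lemma cramerSq_conv_le (ν μ μ' : Measure ℝ) [IsProbabilityMeasure ν] [IsProbabilityMeasure μ]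
    [IsProbabilityMeasure μ'] : cramerSq (ν ∗ μ) (ν ∗ μ') ≤ cramerSq μ μ' := by
  set D := fun x => cdfFn μ x - cdfFn μ' x
  have hD : Measurable D := (measurable_cdfFn μ).sub (measurable_cdfFn μ')
  have jensen (x : ℝ) : ENNReal.ofReal ((cdfFn (ν ∗ μ) x - cdfFn (ν ∗ μ') x) ^ 2)
      ≤ ∫⁻ y, ENNReal.ofReal (D (x - y) ^ 2) ∂ν := by
    have hsub : Measurable fun y : ℝ => x - y := measurable_const.sub measurable_id
    rw [cdfFn_conv, cdfFn_conv, ← integral_sub (integrable_cdfFn_comp μ ν hsub)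
      (integrable_cdfFn_comp μ' ν hsub)]
    exact ofReal_sq_integral_le_lintegral ν <|
      MemLp.of_bound (hD.comp hsub).aestronglyMeasurable 1
        (ae_of_all _ fun y => abs_cdfFn_sub_cdfFn_le_one μ μ' (x - y))
  calc cramerSq (ν ∗ μ) (ν ∗ μ') ≤ ∫⁻ x, ∫⁻ y, ENNReal.ofReal (D (x - y) ^ 2) ∂ν :=
        lintegral_mono jensen
    _ = cramerSq μ μ' := by
        rw [lintegral_lintegral_comp_sub volume ν (hD.pow_const 2).ennreal_ofReal, measure_univ,
          one_mul]
        rfl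

lemma lintegral_Ioi_measure_setOf_le_lt_top {α : Type*} [MeasurableSpace α] (μ : Measure α)
    {g : α → ℝ} (hg : Integrable g μ) : ∫⁻ t in Ioi 0, μ {a | t ≤ g a} < ∞ := by
  have hpos : ∀ t ∈ Ioi (0 : ℝ), μ {a | t ≤ max (g a) 0} = μ {a | t ≤ g a} := fun t ht => by
    simp_rw [le_max_iff, (not_le.2 (mem_Ioi.1 ht)), or_false]
  rw [← setLIntegral_congr_fun measurableSet_Ioi hpos,
    ← lintegral_eq_lintegral_meas_le (f := fun a => max (g a) 0) μ
      (ae_of_all _ fun _ => le_max_right _ _) (hg.aemeasurable.max aemeasurable_const)]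
  refine lt_of_le_of_lt (lintegral_mono fun a => ?_) hg.hasFiniteIntegral
  rw [Real.enorm_eq_ofReal_abs]
  exact ENNReal.ofReal_le_ofReal (max_le (le_abs_self _) (abs_nonneg _))

lemma lintegral_Ioi_measure_Ioi_lt_top (μ : Measure ℝ) (h : Integrable id μ) :
    ∫⁻ x in Ioi 0, μ (Ioi x) < ∞ :=
  lt_of_le_of_lt (lintegral_mono fun x => measure_mono fun y (hy : x < y) => hy.le)
    (lintegral_Ioi_measure_setOf_le_lt_top μ h)

lemma lintegral_Iic_measure_Iic_lt_top (μ : Measure ℝ) (h : Integrable id μ) :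
    ∫⁻ x in Iic 0, μ (Iic x) < ∞ := by
  have hreflect :=
    (Measure.measurePreserving_neg (volume : Measure ℝ)).setLIntegral_comp_preimage_emb
      (MeasurableEquiv.neg ℝ).measurableEmbedding (fun x => μ (Iic x)) (Iic 0)
  simp only [neg_preimage, neg_Iic, neg_zero] at hreflect
  rw [← hreflect, Measure.restrict_congr_set Ioi_ae_eq_Ici.symm]
  have := lintegral_Ioi_measure_setOf_le_lt_top μ h.neg
  simp only [Pi.neg_apply, id, le_neg] at this
  exact this

lemma ofReal_sq_cdfFn_sub_le_measure_Iic (μ ν : Measure ℝ) [IsProbabilityMeasure μ]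
    [IsProbabilityMeasure ν] (x : ℝ) :
    ENNReal.ofReal ((cdfFn μ x - cdfFn ν x) ^ 2) ≤ μ (Iic x) + ν (Iic x) := by
  have := cdfFn_le_one μ x; have := cdfFn_le_one ν x
  rw [← ofReal_cdfFn, ← ofReal_cdfFn, ← ENNReal.ofReal_add (cdfFn_nonneg μ x) (cdfFn_nonneg ν x)]
  exact ENNReal.ofReal_le_ofReal (by nlinarith [cdfFn_nonneg μ x, cdfFn_nonneg ν x])

lemma ofReal_sq_cdfFn_sub_le_measure_Ioi (μ ν : Measure ℝ) [IsProbabilityMeasure μ]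
    [IsProbabilityMeasure ν] (x : ℝ) :
    ENNReal.ofReal ((cdfFn μ x - cdfFn ν x) ^ 2) ≤ μ (Ioi x) + ν (Ioi x) := by
  have := cdfFn_nonneg μ x; have := cdfFn_le_one μ x
  have := cdfFn_nonneg ν x; have := cdfFn_le_one ν x
  rw [← ofReal_one_sub_cdfFn, ← ofReal_one_sub_cdfFn,
    ← ENNReal.ofReal_add (by linarith) (by linarith)]
  exact ENNReal.ofReal_le_ofReal (by nlinarith)

lemma cramerSq_lt_top (μ ν : Measure ℝ) [IsProbabilityMeasure μ] [IsProbabilityMeasure ν]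
    (hμ : Integrable id μ) (hν : Integrable id ν) : cramerSq μ ν < ∞ := by
  rw [cramerSq, ← lintegral_add_compl _ (measurableSet_Iic (a := 0)), compl_Iic]
  refine ENNReal.add_lt_top.2 ⟨?_, ?_⟩
  · calc _ ≤ ∫⁻ x in Iic 0, (μ (Iic x) + ν (Iic x)) :=
          lintegral_mono (ofReal_sq_cdfFn_sub_le_measure_Iic μ ν)
      _ < ∞ := by
          rw [lintegral_add_left (measurable_measure_Iic μ)]
          exact ENNReal.add_lt_top.2
            ⟨lintegral_Iic_measure_Iic_lt_top μ hμ, lintegral_Iic_measure_Iic_lt_top ν hν⟩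
  · calc _ ≤ ∫⁻ x in Ioi 0, (μ (Ioi x) + ν (Ioi x)) :=
          lintegral_mono (ofReal_sq_cdfFn_sub_le_measure_Ioi μ ν)
      _ < ∞ := by
          rw [lintegral_add_left (measurable_measure_Ioi μ)]
          exact ENNReal.add_lt_top.2
            ⟨lintegral_Ioi_measure_Ioi_lt_top μ hμ, lintegral_Ioi_measure_Ioi_lt_top ν hν⟩

theorem Tg_nonexpansive_supCramer_general
    {S : Type*} [Fintype S]
    (P : S → S → ℝ≥0) (hP : ∀ i, ∑ j, P i j = 1)
    (ν : S → S → Measure ℝ) (hν : ∀ i j, IsProbabilityMeasure (ν i j))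
    (η ζ : S → Measure ℝ)
    (hη : ∀ i, IsProbabilityMeasure (η i)) (hζ : ∀ i, IsProbabilityMeasure (ζ i))
    (hηm : ∀ i, MemLp id 2 (η i)) (hζm : ∀ i, MemLp id 2 (ζ i)) :
    (⨆ i, cramerDist (∑ j, (P i j : ℝ≥0∞) • ((ν i j).conv (η j)))
                     (∑ j, (P i j : ℝ≥0∞) • ((ν i j).conv (ζ j))))
      ≤ ⨆ i, cramerDist (η i) (ζ i) := by
  set M := ⨆ i, cramerDist (η i) (ζ i)
  have hM : 0 ≤ M := Real.iSup_nonneg fun i => cramerDist_nonneg _ _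
  have hcramerSq_le (j : S) : cramerSq (η j) (ζ j) ≤ ENNReal.ofReal (M ^ 2) := by
    rw [cramerSq_eq_ofReal_sq_cramerDist
      (cramerSq_lt_top _ _ ((hηm j).integrable one_le_two) ((hζm j).integrable one_le_two)).ne]
    gcongr
    · exact cramerDist_nonneg _ _
    · exact le_ciSup (f := fun i => cramerDist (η i) (ζ i)) (finite_range _).bddAbove j
  refine Real.iSup_le (fun i => cramerDist_le_of_cramerSq_le hM ?_) hM
  calc _ ≤ ∑ j, (P i j : ℝ≥0∞) * cramerSq ((ν i j) ∗ (η j)) ((ν i j) ∗ (ζ j)) :=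
        cramerSq_sum_smul_le (P i) (hP i) _ _
    _ ≤ ∑ j, (P i j : ℝ≥0∞) * cramerSq (η j) (ζ j) := by
        gcongr with j; exact cramerSq_conv_le _ _ _
    _ ≤ ∑ j, (P i j : ℝ≥0∞) * ENNReal.ofReal (M ^ 2) := by
        gcongr with j; exact hcramerSq_le j
    _ = ENNReal.ofReal (M ^ 2) := by
        rw [← Finset.sum_mul, ← ENNReal.ofNNReal_finsetSum, hP i, ENNReal.coe_one, one_mul]

/-- the operator `(T_g η)_i = Σ_j P_{ij} (ν_{ij}^{(g)} ∗ η_j)` is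
non-expansive in the supremum Cramér metric:
`max_i ℓ_C((T_g η)_i, (T_g ζ)_i) ≤ max_i ℓ_C(η_i, ζ_i)`. -/
theorem Tg_nonexpansive_supCramer
    {S : Type*} [Fintype S] [Nonempty S]
    (P : S → S → ℝ≥0) (hP : ∀ i, ∑ j, P i j = 1)
    (ν : S → S → Measure ℝ) (hν : ∀ i j, IsProbabilityMeasure (ν i j))
    (η ζ : S → Measure ℝ)
    (hη : ∀ i, IsProbabilityMeasure (η i)) (hζ : ∀ i, IsProbabilityMeasure (ζ i))
    (hηm : ∀ i, MemLp id 2 (η i)) (hζm : ∀ i, MemLp id 2 (ζ i)) :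
    (⨆ i, cramerDist (∑ j, (P i j : ℝ≥0∞) • ((ν i j).conv (η j)))
                     (∑ j, (P i j : ℝ≥0∞) • ((ν i j).conv (ζ j))))
      ≤ ⨆ i, cramerDist (η i) (ζ i) :=
  Tg_nonexpansive_supCramer_general P hP ν hν η ζ hη hζ hηm hζm
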